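/- The Δ-robustness of coherence on qubit states is discontinuous: define f on qubit density matrices by f(ρ) = |ρ₀₁|/√(ρ₀₀ ρ₁₁) if ρ₀₀ ρ₁₁ > 0 and f(ρ) = 0 otherwise. For every ε ∈ (0, 1), the pure state |ψ_ε⟩ = √(1−ε)|0⟩ + √ε|1⟩ satisfies f(|ψ_ε⟩⟨ψ_ε|) = 1, while |ψ_ε⟩⟨ψ_ε| → |0⟩⟨0| in trace norm as ε → 0 and f(|0⟩⟨0|) = 0; hence f is not continuous with respect to the trace norm. -/

import Mathlib

open scoped Matrix Kronecker ComplexOrder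

noncomputable section

/-- A density matrix: positive semidefinite with unit trace. -/
def IsDensityMatrix {ι : Type*} [Fintype ι] (ρ : Matrix ι ι ℂ) : Prop :=
  ρ.PosSemidef ∧ ρ.trace = 1

/-- The positive semidefinite square root (as in the older Mathlib's `Matrix.PosSemidef.sqrt`). -/
noncomputable def Matrix.PosSemidef.sqrt {n : Type*} [Fintype n] [DecidableEq n]
    {A : Matrix n n ℂ} (hA : A.PosSemidef) : Matrix n n ℂ :=
  (hA.1.eigenvectorUnitary : Matrix n n ℂ) * Matrix.diagonal ((↑) ∘ (Real.sqrt ·) ∘ hA.1.eigenvalues) *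
  (star hA.1.eigenvectorUnitary : Matrix n n ℂ)

/-- The trace norm `‖M‖₁ = Tr √(M† M)`. -/
noncomputable def traceNorm {ι : Type*} [Fintype ι] [DecidableEq ι]
    (M : Matrix ι ι ℂ) : ℝ :=
  ((Matrix.posSemidef_conjTranspose_mul_self M).sqrt.trace).re

/-- The amplification `Λ ⊗ id_k` of a linear map on matrices. -/
def amplify {ι : Type*} [Fintype ι] [DecidableEq ι]
    (Λ : Matrix ι ι ℂ →ₗ[ℂ] Matrix ι ι ℂ) (k : ℕ)
    (M : Matrix (ι × Fin k) (ι × Fin k) ℂ) : Matrix (ι × Fin k) (ι × Fin k) ℂ :=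
  Matrix.of fun p q => Λ (Matrix.of fun i j => M (i, p.2) (j, q.2)) p.1 q.1

/-- A linear map on matrices is CPTP (a quantum channel) if all its amplifications
preserve positive semidefiniteness and it preserves the trace. -/
def IsCPTP {ι : Type*} [Fintype ι] [DecidableEq ι]
    (Λ : Matrix ι ι ℂ →ₗ[ℂ] Matrix ι ι ℂ) : Prop :=
  (∀ (k : ℕ) (M : Matrix (ι × Fin k) (ι × Fin k) ℂ),
      M.PosSemidef → (amplify Λ k M).PosSemidef) ∧
  (∀ M, (Λ M).trace = M.trace)

/-- A quantum channel on a `d`-dimensional system. -/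
structure QChannel (d : ℕ) where
  toFun : Matrix (Fin d) (Fin d) ℂ →ₗ[ℂ] Matrix (Fin d) (Fin d) ℂ
  cptp : IsCPTP toFun

/-- A resource theory: a convex compact set `F` of free states and a set `O` of free
operations containing the identity, closed under composition, preserving `F`, and
containing the state-preparation channel `ρ ↦ Tr(ρ)σ` for every free `σ`. -/
structure ResourceTheory (d : ℕ) where
  F : Set (Matrix (Fin d) (Fin d) ℂ)
  O : Set (QChannel d)
  F_density : ∀ σ ∈ F, IsDensityMatrix σ
  F_convex : Convex ℝ F
  F_compact : IsCompact F
  id_mem : ∃ Λ ∈ O, ∀ ρ, Λ.toFun ρ = ρ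
  comp_mem : ∀ Λ₁ ∈ O, ∀ Λ₂ ∈ O, ∃ Λ ∈ O, ∀ ρ, Λ.toFun ρ = Λ₂.toFun (Λ₁.toFun ρ)
  free_mapsto : ∀ Λ ∈ O, ∀ σ ∈ F, Λ.toFun σ ∈ F
  prep_mem : ∀ σ ∈ F, ∃ Λ ∈ O, ∀ ρ : Matrix (Fin d) (Fin d) ℂ, Λ.toFun ρ = ρ.trace • σ

/-- `ρ → σ`: for every `ε > 0` some free operation maps `ρ` within trace-distance `ε` of `σ`. -/
def Converts {d : ℕ} (RT : ResourceTheory d) (ρ σ : Matrix (Fin d) (Fin d) ℂ) : Prop :=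
  ∀ ε > 0, ∃ Λ ∈ RT.O, traceNorm (Λ.toFun ρ - σ) < ε

/-- A resource monotone: nonnegative on states, nonincreasing under free operations,
vanishing on free states. -/
def IsMonotone {d : ℕ} (RT : ResourceTheory d) (R : Matrix (Fin d) (Fin d) ℂ → ℝ) : Prop :=
  (∀ ρ, IsDensityMatrix ρ → 0 ≤ R ρ) ∧
  (∀ ρ, IsDensityMatrix ρ → ∀ Λ ∈ RT.O, R (Λ.toFun ρ) ≤ R ρ) ∧
  (∀ σ ∈ RT.F, R σ = 0)

/-- The pure state `|ψ⟩⟨ψ|`. -/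
def pureState {ι : Type*} (ψ : ι → ℂ) : Matrix ι ι ℂ :=
  Matrix.vecMulVec ψ (star ψ)

/-- `ψ` is a unit vector. -/
def IsUnitVec {ι : Type*} [Fintype ι] (ψ : ι → ℂ) : Prop :=
  ∑ i, Complex.normSq (ψ i) = 1

/-- Trace-norm distance from `ρ` to a set of states. -/
noncomputable def distToSet {ι : Type*} [Fintype ι] [DecidableEq ι]
    (F : Set (Matrix ι ι ℂ)) (ρ : Matrix ι ι ℂ) : ℝ :=
  sInf ((fun μ => traceNorm (ρ - μ)) '' F)


/-- The single-qubit Δ-robustness of coherence: `|ρ₀₁|/√(ρ₀₀ρ₁₁)` when `ρ₀₀ρ₁₁ > 0`,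
and `0` otherwise (in particular `0` on incoherent states). -/
noncomputable def deltaRobustness (ρ : Matrix (Fin 2) (Fin 2) ℂ) : ℝ :=
  if 0 < (ρ 0 0).re * (ρ 1 1).re then
    ‖ρ 0 1‖ / Real.sqrt ((ρ 0 0).re * (ρ 1 1).re)
  else 0

/-- The pure state vector `|ψ_ε⟩ = √(1−ε)|0⟩ + √ε|1⟩`. -/
noncomputable def psiVec (ε : ℝ) : Fin 2 → ℂ :=
  ![(Real.sqrt (1 - ε) : ℂ), (Real.sqrt ε : ℂ)]

/-- The basis vector `|0⟩`. -/
def ketZero : Fin 2 → ℂ := ![1, 0]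

/-- Continuity with respect to the trace norm, on density matrices. -/
def TraceNormContinuous (R : Matrix (Fin 2) (Fin 2) ℂ → ℝ) : Prop :=
  ∀ ρ, IsDensityMatrix ρ → ∀ ε > 0, ∃ δ > 0, ∀ σ, IsDensityMatrix σ →
    traceNorm (ρ - σ) < δ → |R ρ - R σ| < ε

/-!
A qubit pure state with both amplitudes nonzero has Δ-robustness
`|ψ₀ ψ̄₁| / √(|ψ₀|² |ψ₁|²) = 1`, whereas `|0⟩⟨0|` is incoherent. The difference of two qubit
states is Hermitian and traceless, so it squares to the scalar `a² + |b|²` (with `a`, `b` its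
`(0,0)` and `(0,1)` entries) and its trace norm is `2 √(a² + |b|²)`; for `|ψ_ε⟩` and `|0⟩` this
is `2 √ε → 0`. A trace-norm continuous function would thus send the constant `1` to `0`.
-/

open Filter Topology

section TraceNorm

variable {ι : Type*} [Fintype ι] [DecidableEq ι]

lemma Matrix.PosSemidef.trace_sqrt {A : Matrix ι ι ℂ} (hA : A.PosSemidef) :
    hA.sqrt.trace = ∑ i, ((Real.sqrt (hA.1.eigenvalues i) : ℝ) : ℂ) := by
  rw [Matrix.PosSemidef.sqrt, Matrix.trace_mul_cycle, Unitary.coe_star_mul_self, one_mul,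
    Matrix.trace_diagonal]
  rfl

lemma Matrix.IsHermitian.eigenvalues_eq_of_eq_smul_one {A : Matrix ι ι ℂ} (hA : A.IsHermitian)
    {c : ℝ} (h : A = (c : ℂ) • 1) (i : ι) : hA.eigenvalues i = c := by
  have hdiag := congrFun (congrFun hA.conjStarAlgAut_star_eigenvectorUnitary i) i
  subst h
  simpa [Unitary.conjStarAlgAut_apply] using hdiag.symm

lemma traceNorm_eq_of_conjTranspose_mul_self_eq_smul_one {M : Matrix ι ι ℂ} {c : ℝ}
    (h : Mᴴ * M = (c : ℂ) • 1) : traceNorm M = Fintype.card ι * Real.sqrt c := by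
  have hA := Matrix.posSemidef_conjTranspose_mul_self M
  rw [traceNorm, hA.trace_sqrt]
  simp [hA.1.eigenvalues_eq_of_eq_smul_one h]

lemma traceNorm_neg (M : Matrix ι ι ℂ) :
    traceNorm (-M) = traceNorm M := by
  -- `sqrt` takes the positivity proof as argument, so its matrix cannot be rewritten in place.
  have sqrt_congr : ∀ {A B : Matrix ι ι ℂ} (hA : A.PosSemidef) (hB : B.PosSemidef),
      A = B → hA.sqrt = hB.sqrt := by
    rintro A _ hA hB rfl
    rfl
  rw [traceNorm, traceNorm, sqrt_congr _ (Matrix.posSemidef_conjTranspose_mul_self M)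
    (by rw [Matrix.conjTranspose_neg, neg_mul_neg])]

lemma traceNorm_sub_comm (A B : Matrix ι ι ℂ) :
    traceNorm (A - B) = traceNorm (B - A) := by
  rw [← neg_sub, traceNorm_neg]

end TraceNorm

lemma Matrix.mul_self_eq_smul_one_of_isHermitian_of_trace_eq_zero {M : Matrix (Fin 2) (Fin 2) ℂ}
    (hM : M.IsHermitian) (htr : M.trace = 0) :
    M * M = (((M 0 0).re ^ 2 + ‖M 0 1‖ ^ 2 : ℝ) : ℂ) • 1 := by
  obtain ⟨a, ha⟩ : ∃ a : ℝ, M 0 0 = a := ⟨_, (hM.coe_re_apply_self 0).symm⟩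
  have h10 : M 1 0 = star (M 0 1) := (hM.apply 1 0).symm
  have h11 : M 1 1 = -a := by rw [Matrix.trace_fin_two, ha] at htr; linear_combination htr
  have hnorm : ((‖M 0 1‖ ^ 2 : ℝ) : ℂ) = M 0 1 * star (M 0 1) := by
    rw [Complex.star_def, Complex.mul_conj, Complex.normSq_eq_norm_sq]
  rw [ha, Complex.ofReal_re, Complex.ofReal_add, hnorm]
  ext i j
  fin_cases i <;> fin_cases j <;>
    simp [Matrix.mul_apply, Fin.sum_univ_two, ha, h10, h11] <;> ring

lemma traceNorm_of_isHermitian_of_trace_eq_zero {M : Matrix (Fin 2) (Fin 2) ℂ}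
    (hM : M.IsHermitian) (htr : M.trace = 0) :
    traceNorm M = 2 * Real.sqrt ((M 0 0).re ^ 2 + ‖M 0 1‖ ^ 2) := by
  rw [traceNorm_eq_of_conjTranspose_mul_self_eq_smul_one
    (by rw [hM.eq]; exact Matrix.mul_self_eq_smul_one_of_isHermitian_of_trace_eq_zero hM htr)]
  simp

lemma traceNorm_sub_of_isDensityMatrix {ρ σ : Matrix (Fin 2) (Fin 2) ℂ} (hρ : IsDensityMatrix ρ)
    (hσ : IsDensityMatrix σ) :
    traceNorm (ρ - σ) = 2 * Real.sqrt (((ρ - σ) 0 0).re ^ 2 + ‖(ρ - σ) 0 1‖ ^ 2) :=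
  traceNorm_of_isHermitian_of_trace_eq_zero (hρ.1.1.sub hσ.1.1)
    (by rw [Matrix.trace_sub, hρ.2, hσ.2, sub_self])

lemma pureState_apply {ι : Type*} (ψ : ι → ℂ) (i j : ι) :
    pureState ψ i j = ψ i * star (ψ j) :=
  Matrix.vecMulVec_apply ψ (star ψ) i j

lemma isDensityMatrix_pureState {ι : Type*} [Fintype ι] {ψ : ι → ℂ} (hψ : IsUnitVec ψ) :
    IsDensityMatrix (pureState ψ) := by
  refine ⟨Matrix.posSemidef_vecMulVec_self_star ψ, ?_⟩
  simp only [Matrix.trace, Matrix.diag, pureState_apply, Complex.star_def, Complex.mul_conj]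
  exact_mod_cast hψ

lemma deltaRobustness_pureState {ψ : Fin 2 → ℂ} (h0 : ψ 0 ≠ 0) (h1 : ψ 1 ≠ 0) :
    deltaRobustness (pureState ψ) = 1 := by
  have hpos : 0 < ‖ψ 0‖ * ‖ψ 1‖ := by positivity
  simp only [deltaRobustness, pureState_apply, Complex.star_def, Complex.mul_conj,
    Complex.ofReal_re, Complex.normSq_eq_norm_sq, ← mul_pow, norm_mul, Complex.norm_conj]
  rw [if_pos (by positivity), Real.sqrt_sq hpos.le, div_self hpos.ne']

lemma deltaRobustness_pureState_of_apply_one_eq_zero {ψ : Fin 2 → ℂ} (h1 : ψ 1 = 0) :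
    deltaRobustness (pureState ψ) = 0 := by
  simp [deltaRobustness, pureState_apply, h1]

lemma TraceNormContinuous.tendsto {R : Matrix (Fin 2) (Fin 2) ℂ → ℝ} (hR : TraceNormContinuous R)
    {ρ : Matrix (Fin 2) (Fin 2) ℂ} (hρ : IsDensityMatrix ρ) {α : Type*} {l : Filter α}
    {σ : α → Matrix (Fin 2) (Fin 2) ℂ} (hσ : ∀ᶠ a in l, IsDensityMatrix (σ a))
    (hlim : Tendsto (fun a => traceNorm (ρ - σ a)) l (𝓝 0)) :
    Tendsto (fun a => R (σ a)) l (𝓝 (R ρ)) := by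
  rw [Metric.tendsto_nhds]
  intro ε hε
  obtain ⟨δ, hδ, hRδ⟩ := hR ρ hρ ε hε
  filter_upwards [hσ, hlim.eventually (gt_mem_nhds hδ)] with a ha hclose
  rw [Real.dist_eq, abs_sub_comm]
  exact hRδ (σ a) ha hclose

lemma psiVec_zero (ε : ℝ) : psiVec ε 0 = Real.sqrt (1 - ε) := rfl

lemma psiVec_one (ε : ℝ) : psiVec ε 1 = Real.sqrt ε := rfl

lemma isUnitVec_psiVec {ε : ℝ} (h0 : 0 ≤ ε) (h1 : ε ≤ 1) : IsUnitVec (psiVec ε) := by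
  simp only [IsUnitVec, Fin.sum_univ_two, psiVec_zero, psiVec_one, Complex.normSq_ofReal,
    Real.mul_self_sqrt h0, Real.mul_self_sqrt (sub_nonneg.mpr h1)]
  ring

lemma isUnitVec_ketZero : IsUnitVec ketZero := by
  simp [IsUnitVec, ketZero]

lemma traceNorm_pureState_psiVec_sub_ketZero {ε : ℝ} (h0 : 0 ≤ ε) (h1 : ε ≤ 1) :
    traceNorm (pureState (psiVec ε) - pureState ketZero) = 2 * Real.sqrt ε := by
  rw [traceNorm_sub_of_isDensityMatrix (isDensityMatrix_pureState (isUnitVec_psiVec h0 h1))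
    (isDensityMatrix_pureState isUnitVec_ketZero)]
  have hsq : Real.sqrt (1 - ε) * Real.sqrt (1 - ε) = 1 - ε := Real.mul_self_sqrt (by linarith)
  congr 2
  simp [pureState_apply, psiVec_zero, psiVec_one, ketZero, ← Complex.ofReal_mul, hsq,
    mul_pow, Real.sq_sqrt h0, Real.sq_sqrt (sub_nonneg.mpr h1)]
  ring

lemma tendsto_traceNorm_pureState_psiVec_sub_ketZero :
    Tendsto (fun ε : ℝ => traceNorm (pureState (psiVec ε) - pureState ketZero))
      (𝓝[Set.Ioo 0 1] 0) (𝓝 0) := by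
  have hsqrt : Tendsto (fun ε : ℝ => 2 * Real.sqrt ε) (𝓝 0) (𝓝 0) := by
    simpa using (Real.continuous_sqrt.tendsto 0).const_mul 2
  refine (hsqrt.mono_left nhdsWithin_le_nhds).congr' ?_
  filter_upwards [self_mem_nhdsWithin] with ε hε
  exact (traceNorm_pureState_psiVec_sub_ketZero hε.1.le hε.2.le).symm

lemma deltaRobustness_pureState_psiVec {ε : ℝ} (hε : ε ∈ Set.Ioo (0 : ℝ) 1) :
    deltaRobustness (pureState (psiVec ε)) = 1 :=
  deltaRobustness_pureState
    (by simpa [psiVec_zero, Real.sqrt_eq_zero', sub_nonpos] using hε.2)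
    (by simpa [psiVec_one, Real.sqrt_eq_zero'] using hε.1)

/-- The Δ-robustness of coherence is discontinuous on qubit states:
`f(|ψ_ε⟩⟨ψ_ε|) = 1` for all `ε ∈ (0,1)`, while `|ψ_ε⟩⟨ψ_ε| → |0⟩⟨0|` in trace norm as
`ε → 0` and `f(|0⟩⟨0|) = 0`; hence `f` is not trace-norm continuous. -/
theorem deltaRobustness_discontinuous :
    (∀ ε : ℝ, ε ∈ Set.Ioo (0 : ℝ) 1 → deltaRobustness (pureState (psiVec ε)) = 1) ∧
    Filter.Tendsto (fun ε : ℝ => traceNorm (pureState (psiVec ε) - pureState ketZero))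
      (nhdsWithin 0 (Set.Ioo (0 : ℝ) 1)) (nhds 0) ∧
    deltaRobustness (pureState ketZero) = 0 ∧
    ¬ TraceNormContinuous deltaRobustness := by
  have hketZero : deltaRobustness (pureState ketZero) = 0 :=
    deltaRobustness_pureState_of_apply_one_eq_zero rfl
  refine ⟨fun ε => deltaRobustness_pureState_psiVec,
    tendsto_traceNorm_pureState_psiVec_sub_ketZero, hketZero, fun hR => ?_⟩
  have := left_nhdsWithin_Ioo_neBot (zero_lt_one' ℝ)
  have hto_zero := hR.tendsto (isDensityMatrix_pureState isUnitVec_ketZero)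
    (σ := fun ε => pureState (psiVec ε))
    (eventually_nhdsWithin_of_forall fun ε (hε : ε ∈ Set.Ioo (0 : ℝ) 1) =>
      isDensityMatrix_pureState (isUnitVec_psiVec hε.1.le hε.2.le))
    (by simpa only [traceNorm_sub_comm] using tendsto_traceNorm_pureState_psiVec_sub_ketZero)
  have hto_one : Tendsto (fun ε => deltaRobustness (pureState (psiVec ε)))
      (𝓝[Set.Ioo 0 1] 0) (𝓝 1) :=
    tendsto_const_nhds.congr' (eventually_nhdsWithin_of_forall fun ε hε =>
      (deltaRobustness_pureState_psiVec hε).symm)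
  rw [hketZero] at hto_zero
  exact one_ne_zero (tendsto_nhds_unique hto_one hto_zero)
end
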